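/- In the 5-cube, any subset V' of vertices such that every v ∈ V' has distance count (1,0,2,4,1,0) from V' is the image under a symmetry of the 5-cube of the set V = {(0,0,0,0,0),(0,0,0,1,1),(0,1,1,0,0),(0,1,1,1,1),(1,0,1,0,1),(1,0,1,1,0),(1,1,0,0,1),(1,1,0,1,0)}. -/
import Mathlib

set_option maxRecDepth 100000

def u1 : Fin 5 → Bool := ![false,false,false,false,false]
def u2 : Fin 5 → Bool := ![false,false,false,true,true]
def u3 : Fin 5 → Bool := ![false,true,true,false,false]
def u4 : Fin 5 → Bool := ![false,true,true,true,true]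
def v1 : Fin 5 → Bool := ![true,false,true,false,true]
def v2 : Fin 5 → Bool := ![true,false,true,true,false]
def v3 : Fin 5 → Bool := ![true,true,false,false,true]
def v4 : Fin 5 → Bool := ![true,true,false,true,false]

/-- The special eight-element vertex set `V` of the 5-cube. -/
def V : Finset (Fin 5 → Bool) := {u1, u2, u3, u4, v1, v2, v3, v4}

/- auxiliary definitions -/

def zz : Fin 5 → Bool := fun _ => false

def SS (a b : Fin 5 → Bool) : Finset (Fin 5 → Bool) :=
  Finset.univ.filter (fun w => hammingDist zz w = 3 ∧ hammingDist a w = 3 ∧ hammingDist b w = 3)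

def TT (a b : Fin 5 → Bool) : Finset (Fin 5 → Bool) :=
  {zz, a, b, fun i => a i || b i} ∪ SS a b

lemma dist_flip (c x y : Fin 5 → Bool) :
    hammingDist (fun i => xor (c i) (x i)) (fun i => xor (c i) (y i)) = hammingDist x y := by
  unfold hammingDist
  congr 1
  apply Finset.filter_congr
  intro i _
  show (xor (c i) (x i) ≠ xor (c i) (y i)) ↔ (x i ≠ y i)
  cases hc : c i <;> cases hx : x i <;> cases hy : y i <;> simp

lemma flip_inj (c : Fin 5 → Bool) :
    Function.Injective (fun x : Fin 5 → Bool => fun i => xor (c i) (x i)) := by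
  intro x y h
  funext i
  have := congrFun h i
  simp only at this
  cases hc : c i <;> cases hx : x i <;> cases hy : y i <;> simp_all

-- decide lemmas
lemma P1 : ∀ a c : Fin 5 → Bool, hammingDist zz a = 2 → hammingDist zz c = 4 →
    hammingDist a c ≠ 3 := by decide
lemma P2 : ∀ a b : Fin 5 → Bool, hammingDist zz a = 2 → hammingDist zz b = 2 →
    hammingDist a b ≠ 3 := by decide
lemma P3 : ∀ a w : Fin 5 → Bool, hammingDist zz a = 2 → hammingDist zz w = 3 →
    hammingDist a w ≠ 2 ∧ hammingDist a w ≠ 4 := by decide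
lemma P5 : ∀ a b c : Fin 5 → Bool, hammingDist zz a = 2 → hammingDist zz b = 2 →
    hammingDist a b = 4 → hammingDist zz c = 4 → hammingDist a c = 2 → hammingDist b c = 2 →
    ∀ i, c i = (a i || b i) := by decide
lemma P6 : ∀ a b : Fin 5 → Bool, hammingDist zz a = 2 → hammingDist zz b = 2 →
    hammingDist a b = 4 → (SS a b).card = 4 := by decide
lemma P7 : ∀ a b : Fin 5 → Bool, hammingDist zz a = 2 → hammingDist zz b = 2 →
    hammingDist a b = 4 →
    ∃ π : Equiv.Perm (Fin 5), TT a b = V.image (fun x => x ∘ π) := by decide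

lemma main (W : Finset (Fin 5 → Bool)) (h0 : zz ∈ W)
    (hcount : ∀ v ∈ W, ∀ i : Fin 6,
      (W.filter (fun v' => hammingDist v v' = (i : ℕ))).card = ![1,0,2,4,1,0] i) :
    ∃ a b : Fin 5 → Bool, hammingDist zz a = 2 ∧ hammingDist zz b = 2 ∧
      hammingDist a b = 4 ∧ W = TT a b := by
  -- distance trichotomy
  have trich : ∀ v ∈ W, ∀ w ∈ W, w = v ∨ hammingDist v w = 2 ∨ hammingDist v w = 3 ∨
      hammingDist v w = 4 := by
    intro v hv w hw
    have h1 : (W.filter (fun v' => hammingDist v v' = 1)).card = 0 := by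
      exact hcount v hv ⟨1, by norm_num⟩
    have h5 : (W.filter (fun v' => hammingDist v v' = 5)).card = 0 := by
      exact hcount v hv ⟨5, by norm_num⟩
    rw [Finset.card_eq_zero] at h1 h5
    have hn1 : hammingDist v w ≠ 1 := by
      intro h
      have : w ∈ W.filter (fun v' => hammingDist v v' = 1) := by
        simp [Finset.mem_filter, hw, h]
      rw [h1] at this; exact absurd this (Finset.notMem_empty w)
    have hn5 : hammingDist v w ≠ 5 := by
      intro h
      have : w ∈ W.filter (fun v' => hammingDist v v' = 5) := by
        simp [Finset.mem_filter, hw, h]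
      rw [h5] at this; exact absurd this (Finset.notMem_empty w)
    have hle : hammingDist v w ≤ 5 := by
      have : hammingDist v w ≤ Fintype.card (Fin 5) := hammingDist_le_card_fintype
      simpa using this
    rcases Nat.lt_or_ge (hammingDist v w) 1 with h | h
    · left
      have : hammingDist v w = 0 := by omega
      exact (eq_of_hammingDist_eq_zero this).symm
    · right
      interval_cases h' : hammingDist v w <;> omega
  -- the three distance classes from zz
  have hA : (W.filter (fun v' => hammingDist zz v' = 2)).card = 2 := by
    exact hcount zz h0 ⟨2, by norm_num⟩
  have hB : (W.filter (fun v' => hammingDist zz v' = 3)).card = 4 := by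
    exact hcount zz h0 ⟨3, by norm_num⟩
  have hC : (W.filter (fun v' => hammingDist zz v' = 4)).card = 1 := by
    exact hcount zz h0 ⟨4, by norm_num⟩
  obtain ⟨a, b, hab, hAeq⟩ := Finset.card_eq_two.mp hA
  obtain ⟨c, hCeq⟩ := Finset.card_eq_one.mp hC
  have haW : a ∈ W ∧ hammingDist zz a = 2 := by
    have : a ∈ W.filter (fun v' => hammingDist zz v' = 2) := by rw [hAeq]; simp
    simpa using this
  have hbW : b ∈ W ∧ hammingDist zz b = 2 := by
    have : b ∈ W.filter (fun v' => hammingDist zz v' = 2) := by rw [hAeq]; simp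
    simpa using this
  have hcW : c ∈ W ∧ hammingDist zz c = 4 := by
    have : c ∈ W.filter (fun v' => hammingDist zz v' = 4) := by rw [hCeq]; simp
    simpa using this
  obtain ⟨haW, hda⟩ := haW
  obtain ⟨hbW, hdb⟩ := hbW
  obtain ⟨hcW, hdc⟩ := hcW
  -- the distance-4 filter from c is {zz}
  have hc4 : (W.filter (fun v' => hammingDist c v' = 4)).card = 1 := by
    exact hcount c hcW ⟨4, by norm_num⟩
  have hzc4 : zz ∈ W.filter (fun v' => hammingDist c v' = 4) := by
    simp [Finset.mem_filter, h0, hammingDist_comm c zz, hdc]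
  have hc4eq : W.filter (fun v' => hammingDist c v' = 4) = {zz} := by
    obtain ⟨x, hx⟩ := Finset.card_eq_one.mp hc4
    rw [hx] at hzc4 ⊢
    simp at hzc4
    rw [hzc4]
  -- d a c = 2 and d b c = 2
  have hdac : hammingDist a c = 2 := by
    have hne : a ≠ c := by intro h; rw [h, hdc] at hda; omega
    rcases trich a haW c hcW with h | h | h | h
    · exact absurd h.symm hne
    · exact h
    · exact absurd h (P1 a c hda hdc)
    · exfalso
      have : a ∈ W.filter (fun v' => hammingDist c v' = 4) := by
        simp [Finset.mem_filter, haW, hammingDist_comm c a, h]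
      rw [hc4eq] at this
      simp at this
      rw [this, hammingDist_self] at hda
      omega
  have hdbc : hammingDist b c = 2 := by
    have hne : b ≠ c := by intro h; rw [h, hdc] at hdb; omega
    rcases trich b hbW c hcW with h | h | h | h
    · exact absurd h.symm hne
    · exact h
    · exact absurd h (P1 b c hdb hdc)
    · exfalso
      have : b ∈ W.filter (fun v' => hammingDist c v' = 4) := by
        simp [Finset.mem_filter, hbW, hammingDist_comm c b, h]
      rw [hc4eq] at this
      simp at this
      rw [this, hammingDist_self] at hdb
      omega
  -- distances from a to weight-3 elements are 3
  have hw3 : ∀ w ∈ W, hammingDist zz w = 3 → hammingDist a w = 3 ∧ hammingDist b w = 3 := by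
    intro w hw hzw
    constructor
    · have hne : w ≠ a := by intro h; rw [h, hda] at hzw; omega
      rcases trich a haW w hw with h | h | h | h
      · exact absurd h hne
      · exact absurd h (P3 a w hda hzw).1
      · exact h
      · exact absurd h (P3 a w hda hzw).2
    · have hne : w ≠ b := by intro h; rw [h, hdb] at hzw; omega
      rcases trich b hbW w hw with h | h | h | h
      · exact absurd h hne
      · exact absurd h (P3 b w hdb hzw).1
      · exact h
      · exact absurd h (P3 b w hdb hzw).2
  -- d a b = 4
  have hdab : hammingDist a b = 4 := by
    rcases trich a haW b hbW with h | h | h | h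
    · exact absurd h.symm hab
    · exfalso
      -- then nothing is at distance 4 from a, contradicting the count
      have ha4 : (W.filter (fun v' => hammingDist a v' = 4)).card = 1 := by
        exact hcount a haW ⟨4, by norm_num⟩
      have : W.filter (fun v' => hammingDist a v' = 4) = ∅ := by
        rw [Finset.eq_empty_iff_forall_notMem]
        intro w hwmem
        rw [Finset.mem_filter] at hwmem
        obtain ⟨hw, hd4⟩ := hwmem
        rcases trich zz h0 w hw with h' | h' | h' | h'
        · rw [h'] at hd4
          rw [hammingDist_comm a zz, hda] at hd4
          omega
        · have : w ∈ W.filter (fun v' => hammingDist zz v' = 2) := by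
            simp [Finset.mem_filter, hw, h']
          rw [hAeq] at this
          simp at this
          rcases this with rfl | rfl
          · rw [hammingDist_self] at hd4; omega
          · rw [h] at hd4; exact absurd hd4 (by norm_num)
        · have h3 := (hw3 w hw h').1
          rw [h3] at hd4
          exact absurd hd4 (by norm_num)
        · have : w ∈ W.filter (fun v' => hammingDist zz v' = 4) := by
            simp [Finset.mem_filter, hw, h']
          rw [hCeq] at this
          simp at this
          rw [this] at hd4
          rw [hdac] at hd4
          omega
      rw [this] at ha4
      simp at ha4
    · exact absurd h (P2 a b hda hdb)
    · exact h
  -- identify the distance-3 class with SS a b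
  have hBS : W.filter (fun v' => hammingDist zz v' = 3) = SS a b := by
    apply Finset.eq_of_subset_of_card_le
    · intro w hw
      rw [Finset.mem_filter] at hw
      obtain ⟨hwW, hw3'⟩ := hw
      have := hw3 w hwW hw3'
      simp [SS, Finset.mem_filter, hw3', this.1, this.2]
    · rw [P6 a b hda hdb hdab, hB]
  -- identify c
  have hceq : c = fun i => a i || b i := by
    funext i
    exact P5 a b c hda hdb hdab hdc hdac hdbc i
  -- conclude W = TT a b
  refine ⟨a, b, hda, hdb, hdab, ?_⟩
  ext w
  constructor
  · intro hw
    rcases trich zz h0 w hw with h' | h' | h' | h'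
    · subst h'
      simp [TT, Finset.mem_union]
    · have : w ∈ W.filter (fun v' => hammingDist zz v' = 2) := by
        simp [Finset.mem_filter, hw, h']
      rw [hAeq] at this
      simp at this
      rcases this with rfl | rfl <;> simp [TT, Finset.mem_union]
    · have : w ∈ W.filter (fun v' => hammingDist zz v' = 3) := by
        simp [Finset.mem_filter, hw, h']
      rw [hBS] at this
      simp [TT, Finset.mem_union, this]
    · have : w ∈ W.filter (fun v' => hammingDist zz v' = 4) := by
        simp [Finset.mem_filter, hw, h']
      rw [hCeq] at this
      simp at this
      subst this
      rw [hceq]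
      simp [TT, Finset.mem_union]
  · intro hw
    rw [TT, Finset.mem_union] at hw
    rcases hw with hw | hw
    · simp at hw
      rcases hw with rfl | rfl | rfl | rfl
      · exact h0
      · exact haW
      · exact hbW
      · rw [← hceq]; exact hcW
    · rw [← hBS] at hw
      rw [Finset.mem_filter] at hw
      exact hw.1

/-- Any (nonempty) subset `V'` of the vertices of the 5-cube, each of whose
elements has distance count `(1,0,2,4,1,0)` from `V'`, is the image of `V`
under a symmetry of the 5-cube (a coordinate permutation `π` composed with
coordinate flips `ε`). -/
theorem stmt11 (V' : Finset (Fin 5 → Bool)) (hne : V'.Nonempty)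
    (hcount : ∀ v ∈ V', ∀ i : Fin 6,
      (V'.filter (fun v' => hammingDist v v' = (i : ℕ))).card = ![1,0,2,4,1,0] i) :
    ∃ (π : Equiv.Perm (Fin 5)) (ε : Fin 5 → Bool),
      V' = V.image (fun x => fun i => xor (ε i) (x (π i))) := by
  obtain ⟨v0, hv0⟩ := hne
  set f : (Fin 5 → Bool) → (Fin 5 → Bool) := fun x => fun i => xor (v0 i) (x i) with hf
  set W : Finset (Fin 5 → Bool) := V'.image f with hW
  have hff : ∀ x, f (f x) = x := by
    intro x
    funext i
    simp only [hf]
    cases hv : v0 i <;> cases hx : x i <;> simp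
  have h0 : zz ∈ W := by
    rw [hW, Finset.mem_image]
    refine ⟨v0, hv0, ?_⟩
    funext i
    simp [hf, zz]
  have hWc : ∀ v ∈ W, ∀ i : Fin 6,
      (W.filter (fun v' => hammingDist v v' = (i : ℕ))).card = ![1,0,2,4,1,0] i := by
    intro v hv i
    rw [hW, Finset.mem_image] at hv
    obtain ⟨x, hx, rfl⟩ := hv
    have hfilter : W.filter (fun v' => hammingDist (f x) v' = (i : ℕ))
        = (V'.filter (fun y => hammingDist x y = (i : ℕ))).image f := by
      rw [hW, Finset.filter_image]
      congr 1
      apply Finset.filter_congr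
      intro y _
      show (hammingDist (f x) (f y) = (i : ℕ)) ↔ _
      rw [hf]
      rw [dist_flip v0 x y]
    rw [hfilter, Finset.card_image_of_injective _ (flip_inj v0)]
    exact hcount x hx i
  obtain ⟨a, b, hda, hdb, hdab, hWT⟩ := main W h0 hWc
  obtain ⟨π, hπ⟩ := P7 a b hda hdb hdab
  refine ⟨π, v0, ?_⟩
  have hV' : V' = W.image f := by
    rw [hW, Finset.image_image]
    have : (f ∘ f) = id := by funext x; exact hff x
    rw [this, Finset.image_id]
  rw [hV', hWT, hπ, Finset.image_image]
  rfl
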